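/- The operators A_l (l = 1,…,N−1) and B_k (k = 1,…,M−1) each commute with the perturbation operator H_1 = y^m ∂_x^n + x^n ∂_y^m. -/

import Mathlib

open MvPolynomial

noncomputable def XD {σ : Type*} [DecidableEq σ] (i : σ) :
    Module.End ℝ (MvPolynomial σ ℝ) :=
  (LinearMap.mulLeft ℝ (X i)).comp (pderiv i).toLinearMap

/-- `A_l = n_{l+1} x_l ∂_{x_l} - n_l x_{l+1} ∂_{x_{l+1}}`. -/
noncomputable def opA {N M : ℕ} (n : Fin N → ℕ) (l : ℕ) (hl : l + 1 < N) :
    Module.End ℝ (MvPolynomial (Fin N ⊕ Fin M) ℝ) :=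
  (n ⟨l + 1, hl⟩ : ℝ) • XD (Sum.inl ⟨l, by omega⟩) -
    (n ⟨l, by omega⟩ : ℝ) • XD (Sum.inl ⟨l + 1, hl⟩)

/-- `B_k = m_{k+1} y_k ∂_{y_k} - m_k y_{k+1} ∂_{y_{k+1}}`. -/
noncomputable def opB {N M : ℕ} (m : Fin M → ℕ) (k : ℕ) (hk : k + 1 < M) :
    Module.End ℝ (MvPolynomial (Fin N ⊕ Fin M) ℝ) :=
  (m ⟨k + 1, hk⟩ : ℝ) • XD (Sum.inr ⟨k, by omega⟩) -
    (m ⟨k, by omega⟩ : ℝ) • XD (Sum.inr ⟨k + 1, hk⟩)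

noncomputable def Dxn {N M : ℕ} (n : Fin N → ℕ) :
    Module.End ℝ (MvPolynomial (Fin N ⊕ Fin M) ℝ) :=
  (List.ofFn fun l : Fin N =>
    ((pderiv (Sum.inl l)).toLinearMap : Module.End ℝ (MvPolynomial (Fin N ⊕ Fin M) ℝ)) ^ n l).prod

noncomputable def Dym {N M : ℕ} (m : Fin M → ℕ) :
    Module.End ℝ (MvPolynomial (Fin N ⊕ Fin M) ℝ) :=
  (List.ofFn fun k : Fin M =>
    ((pderiv (Sum.inr k)).toLinearMap : Module.End ℝ (MvPolynomial (Fin N ⊕ Fin M) ℝ)) ^ m k).prod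

/-- `H₁ = y^m ∂_x^n + x^n ∂_y^m`. -/
noncomputable def H1 {N M : ℕ} (n : Fin N → ℕ) (m : Fin M → ℕ) :
    Module.End ℝ (MvPolynomial (Fin N ⊕ Fin M) ℝ) :=
  (LinearMap.mulLeft ℝ (∏ k : Fin M, X (Sum.inr k) ^ m k)).comp (Dxn n) +
    (LinearMap.mulLeft ℝ (∏ l : Fin N, X (Sum.inl l) ^ n l)).comp (Dym m)

/-! `XD i = x_i ∂_i` is the Euler operator of the variable `x_i`, and `ad (XD i)` is a derivation of
the operator algebra under which `X j` has weight `δ_ij` and `∂_j` has weight `-δ_ij`. Hence a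
monomial differential operator `x^a ∂^b` is an eigenvector of `ad (XD i)` with eigenvalue
`a_i - b_i`. Under `x_l ∂_{x_l}` the two summands `y^m ∂_x^n` and `x^n ∂_y^m` of `H₁` have weights
`-n_l` and `n_l`, so `A_l = n_{l+1} x_l ∂_{x_l} - n_l x_{l+1} ∂_{x_{l+1}}` acts on each of them by
`±(n_{l+1} n_l - n_l n_{l+1}) = 0`; the same computation in the `y`-variables handles `B_k`. -/

section AdEigenvector

variable {R A : Type*} [CommRing R] [Ring A] [Algebra R A] {E E' S T : A} {a b s t : R}

theorem lie_mul_eq_smul_of_lie_eq_smul (hS : ⁅E, S⁆ = a • S) (hT : ⁅E, T⁆ = b • T) :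
    ⁅E, S * T⁆ = (a + b) • (S * T) := by
  have leibniz : ⁅E, S * T⁆ = ⁅E, S⁆ * T + S * ⁅E, T⁆ := by
    simp only [Ring.lie_def]
    noncomm_ring
  rw [leibniz, hS, hT, smul_mul_assoc, mul_smul_comm, add_smul]

theorem lie_pow_eq_smul_of_lie_eq_smul (h : ⁅E, T⁆ = a • T) (k : ℕ) :
    ⁅E, T ^ k⁆ = (k * a) • T ^ k := by
  induction k with
  | zero => simp [Ring.lie_def]
  | succ k ih =>
    rw [pow_succ, lie_mul_eq_smul_of_lie_eq_smul ih h, Nat.cast_succ, add_one_mul]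

theorem lie_list_prod_ofFn_eq_smul {k : ℕ} {f : Fin k → A} {c : Fin k → R}
    (h : ∀ j, ⁅E, f j⁆ = c j • f j) : ⁅E, (List.ofFn f).prod⁆ = (∑ j, c j) • (List.ofFn f).prod := by
  induction k with
  | zero => simp [Ring.lie_def]
  | succ k ih =>
    rw [List.ofFn_succ, List.prod_cons, Fin.sum_univ_succ]
    exact lie_mul_eq_smul_of_lie_eq_smul (h 0) (ih fun j => h j.succ)

theorem commute_smul_sub_smul_of_lie_eq_smul (hE : ⁅E, T⁆ = s • T) (hE' : ⁅E', T⁆ = t • T)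
    (h : a * s = b * t) : Commute (a • E - b • E') T := by
  rw [commute_iff_lie_eq]
  calc ⁅a • E - b • E', T⁆ = a • ⁅E, T⁆ - b • ⁅E', T⁆ := by
        simp only [Ring.lie_def, sub_mul, mul_sub, smul_mul_assoc, mul_smul_comm, smul_sub]
        abel
    _ = 0 := by rw [hE, hE', smul_smul, smul_smul, h, sub_self]

end AdEigenvector

section EulerOperator

variable {σ : Type*} [DecidableEq σ]

theorem pderiv_pderiv_comm {R : Type*} [CommRing R] (i j : σ) (p : MvPolynomial σ R) :
    pderiv i (pderiv j p) = pderiv j (pderiv i p) := by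
  have h : ⁅pderiv i, pderiv j⁆ = (0 : Derivation R (MvPolynomial σ R) (MvPolynomial σ R)) :=
    derivation_ext fun k => by
      rw [Derivation.commutator_apply, pderiv_X, pderiv_X, Pi.single_apply, Pi.single_apply]
      split_ifs <;> simp
  rw [← sub_eq_zero, ← Derivation.commutator_apply, h, Derivation.zero_apply]

theorem lie_XD_pderiv (i j : σ) :
    ⁅XD i, (pderiv j).toLinearMap⁆ =
      (if i = j then -1 else 0 : ℝ) • ((pderiv j).toLinearMap : Module.End ℝ (MvPolynomial σ ℝ)) := by
  refine LinearMap.ext fun p => ?_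
  simp only [XD, Ring.lie_def, LinearMap.sub_apply, Module.End.mul_apply, LinearMap.comp_apply,
    LinearMap.smul_apply, LinearMap.mulLeft_apply, Derivation.coeFn_coe, Derivation.leibniz,
    pderiv_X, pderiv_pderiv_comm i j]
  by_cases h : i = j
  · subst h; simp
  · simp [h]

theorem lie_XD_mulLeft_X (i j : σ) :
    ⁅XD i, LinearMap.mulLeft ℝ (X j : MvPolynomial σ ℝ)⁆ =
      (if i = j then 1 else 0 : ℝ) • LinearMap.mulLeft ℝ (X j) := by
  refine LinearMap.ext fun p => ?_
  simp only [XD, Ring.lie_def, LinearMap.sub_apply, Module.End.mul_apply, LinearMap.comp_apply,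
    LinearMap.smul_apply, LinearMap.mulLeft_apply, Derivation.coeFn_coe, Derivation.leibniz,
    pderiv_X]
  by_cases h : i = j
  · subst h; simp; ring
  · simp [h, Ne.symm h]; ring

theorem lie_XD_mulLeft_prod_X_pow (i : σ) {k : ℕ} (v : Fin k → σ) (e : Fin k → ℕ) :
    ⁅XD i, LinearMap.mulLeft ℝ (∏ j, X (v j) ^ e j : MvPolynomial σ ℝ)⁆ =
      (∑ j, (e j : ℝ) * if i = v j then 1 else 0) • LinearMap.mulLeft ℝ (∏ j, X (v j) ^ e j) := by
  have hprod : LinearMap.mulLeft ℝ (∏ j, X (v j) ^ e j) =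
      (List.ofFn fun j => LinearMap.mulLeft ℝ (X (v j) : MvPolynomial σ ℝ) ^ e j).prod := by
    rw [← Fin.prod_ofFn]
    exact (map_list_prod (Algebra.lmul ℝ (MvPolynomial σ ℝ)) _).trans (by simp [List.map_ofFn]; rfl)
  rw [hprod]
  exact lie_list_prod_ofFn_eq_smul fun j =>
    lie_pow_eq_smul_of_lie_eq_smul (lie_XD_mulLeft_X i (v j)) (e j)

theorem lie_XD_list_prod_pderiv_pow (i : σ) {k : ℕ} (v : Fin k → σ) (e : Fin k → ℕ) :
    ⁅XD i, (List.ofFn fun j => ((pderiv (v j)).toLinearMap : Module.End ℝ _) ^ e j).prod⁆ =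
      (∑ j, (e j : ℝ) * if i = v j then -1 else 0) •
        (List.ofFn fun j => ((pderiv (v j)).toLinearMap : Module.End ℝ _) ^ e j).prod :=
  lie_list_prod_ofFn_eq_smul fun j =>
    lie_pow_eq_smul_of_lie_eq_smul (lie_XD_pderiv i (v j)) (e j)

theorem lie_XD_mulLeft_mul_list_prod_pderiv (i : σ) {p q : ℕ}
    (v : Fin p → σ) (e : Fin p → ℕ) (w : Fin q → σ) (f : Fin q → ℕ) :
    ⁅XD i, LinearMap.mulLeft ℝ (∏ j, X (v j) ^ e j : MvPolynomial σ ℝ) *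
        (List.ofFn fun j => ((pderiv (w j)).toLinearMap : Module.End ℝ _) ^ f j).prod⁆ =
      ((∑ j, (e j : ℝ) * if i = v j then 1 else 0) + ∑ j, (f j : ℝ) * if i = w j then -1 else 0) •
        (LinearMap.mulLeft ℝ (∏ j, X (v j) ^ e j : MvPolynomial σ ℝ) *
          (List.ofFn fun j => ((pderiv (w j)).toLinearMap : Module.End ℝ _) ^ f j).prod) :=
  lie_mul_eq_smul_of_lie_eq_smul (lie_XD_mulLeft_prod_X_pow i v e)
    (lie_XD_list_prod_pderiv_pow i w f)

end EulerOperator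

section H1

variable {N M : ℕ} (n : Fin N → ℕ) (m : Fin M → ℕ)

noncomputable def ymDxn : Module.End ℝ (MvPolynomial (Fin N ⊕ Fin M) ℝ) :=
  LinearMap.mulLeft ℝ (∏ k : Fin M, X (Sum.inr k) ^ m k) * Dxn n

noncomputable def xnDym : Module.End ℝ (MvPolynomial (Fin N ⊕ Fin M) ℝ) :=
  LinearMap.mulLeft ℝ (∏ l : Fin N, X (Sum.inl l) ^ n l) * Dym m

theorem H1_eq_ymDxn_add_xnDym : H1 n m = ymDxn n m + xnDym n m := rfl

theorem lie_XD_inl_ymDxn (i : Fin N) :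
    ⁅XD (Sum.inl i : Fin N ⊕ Fin M), ymDxn n m⁆ = -(n i : ℝ) • ymDxn n m := by
  rw [ymDxn, Dxn, lie_XD_mulLeft_mul_list_prod_pderiv]
  simp

theorem lie_XD_inl_xnDym (i : Fin N) :
    ⁅XD (Sum.inl i : Fin N ⊕ Fin M), xnDym n m⁆ = (n i : ℝ) • xnDym n m := by
  rw [xnDym, Dym, lie_XD_mulLeft_mul_list_prod_pderiv]
  simp

theorem lie_XD_inr_ymDxn (k : Fin M) :
    ⁅XD (Sum.inr k : Fin N ⊕ Fin M), ymDxn n m⁆ = (m k : ℝ) • ymDxn n m := by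
  rw [ymDxn, Dxn, lie_XD_mulLeft_mul_list_prod_pderiv]
  simp

theorem lie_XD_inr_xnDym (k : Fin M) :
    ⁅XD (Sum.inr k : Fin N ⊕ Fin M), xnDym n m⁆ = -(m k : ℝ) • xnDym n m := by
  rw [xnDym, Dym, lie_XD_mulLeft_mul_list_prod_pderiv]
  simp

end H1

theorem opA_opB_commute_H1 {N M : ℕ}
    (n : Fin N → ℕ) (m : Fin M → ℕ) :
    (∀ (l : ℕ) (hl : l + 1 < N), Commute (opA (M := M) n l hl) (H1 n m)) ∧
    (∀ (k : ℕ) (hk : k + 1 < M), Commute (opB (N := N) m k hk) (H1 n m)) := by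
  refine ⟨fun l hl => ?_, fun k hk => ?_⟩
  · rw [opA, H1_eq_ymDxn_add_xnDym]
    exact (commute_smul_sub_smul_of_lie_eq_smul (lie_XD_inl_ymDxn n m _) (lie_XD_inl_ymDxn n m _)
      (by ring)).add_right
      (commute_smul_sub_smul_of_lie_eq_smul (lie_XD_inl_xnDym n m _) (lie_XD_inl_xnDym n m _)
        (by ring))
  · rw [opB, H1_eq_ymDxn_add_xnDym]
    exact (commute_smul_sub_smul_of_lie_eq_smul (lie_XD_inr_ymDxn n m _) (lie_XD_inr_ymDxn n m _)
      (by ring)).add_right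
      (commute_smul_sub_smul_of_lie_eq_smul (lie_XD_inr_xnDym n m _) (lie_XD_inr_xnDym n m _)
        (by ring))
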